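/- Let S be a finite alphabet with a complementation, let d ≥ 2, and let V, W ⊆ (*S)^d be disjoint equivalent polybox codes without twin pairs with |V| = |W| = 2. Then there exist distinct indices i_1, i_2 ∈ {1,…,d}, letters l_1, l_2 ∈ S, and a word p ∈ (*S)^d such that every word of V ∪ W agrees with p at every coordinate outside {i_1, i_2}, and at the coordinates (i_1, i_2) the two words of V carry the pairs (*, l_2) and (l_1, (l_2)'), while the two words of W carry the pairs ((l_1)', l_2) and (l_1, *). -/

import Mathlib

variable {S : Type}

/-- Words over `*S = S ∪ {*}` are modelled as `Fin d → Option S`, with `none = *`.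
Two words are dichotomous: at some position one carries a letter `s ≠ *`
and the other its complement. -/
def DichoStar {d : ℕ} (c : S → S) (u v : Fin d → Option S) : Prop :=
  ∃ j, ∃ s, u j = some s ∧ v j = some (c s)

/-- Two words over `*S` form a twin pair. -/
def TwinPairStar {d : ℕ} (c : S → S) (u v : Fin d → Option S) : Prop :=
  ∃ j, (∃ s, u j = some s ∧ v j = some (c s)) ∧ ∀ i, i ≠ j → v i = u i

/-- A polybox code over `*S`: a set of pairwise dichotomous words. -/
def PolyboxCodeStar {d : ℕ} (c : S → S) (V : Set (Fin d → Option S)) : Prop :=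
  ∀ u ∈ V, ∀ v ∈ V, u ≠ v → DichoStar c u v

/-- The code contains no twin pair. -/
def NoTwinPairStar {d : ℕ} (c : S → S) (V : Set (Fin d → Option S)) : Prop :=
  ∀ u ∈ V, ∀ v ∈ V, ¬ TwinPairStar c u v

/-- `ES`: sets containing exactly one of `s`, `s'` for every letter `s`. -/
def ESet (c : S → S) : Set (Set S) := {B | ∀ s, Xor' (s ∈ B) (c s ∈ B)}

/-- `Es` for `s ∈ *S`; `E* = ES`. -/
def ELetterStar (c : S → S) : Option S → Set (Set S)
  | none => ESet c
  | some s => {B | B ∈ ESet c ∧ s ∈ B}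

/-- The equicomplementary realization `v̌ ⊆ (ES)^d` of a word over `*S`. -/
def RealizeStar {d : ℕ} (c : S → S) (v : Fin d → Option S) :
    Set (Fin d → Set S) :=
  {x | ∀ i, x i ∈ ELetterStar c (v i)}

/-- The union `⋃_{v ∈ V} v̌`. -/
def RealizeSetStar {d : ℕ} (c : S → S) (V : Set (Fin d → Option S)) :
    Set (Fin d → Set S) :=
  ⋃ v ∈ V, RealizeStar c v

/-- Two codes are equivalent if their realizations coincide. -/
def EquivCodesStar {d : ℕ} (c : S → S) (V W : Set (Fin d → Option S)) : Prop :=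
  RealizeSetStar c V = RealizeSetStar c W

/-- A partition code: a polybox code whose realization is the whole box `(ES)^d`. -/
def PartitionCodeStar {d : ℕ} (c : S → S) (U : Set (Fin d → Option S)) : Prop :=
  PolyboxCodeStar c U ∧ RealizeSetStar c U = {x | ∀ i, x i ∈ ESet c}

/-!
The realization of a word is the product `∏ᵢ E(uᵢ)`, and `ǔ ⊆ w̌` holds exactly when `u` refines
`w` letterwise (`wᵢ ∈ {*, uᵢ}`). If a product is covered by two others without lying in either,
then both failures sit in one coordinate, and when the two covering words are dichotomous this
coordinate is their dichotomy position. If the realization of a word of one code lies inside that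
of a word of the other code, two applications of this fact pin down the configuration claimed;
if there is no such containment, applying it to all four words makes the two words of `V` a twin
pair.
-/

open Set

theorem Set.eq_of_univ_pi_subset_union {ι : Type*} {α : ι → Type*} {A B C : ∀ i, Set (α i)}
    (hA : ∀ i, (A i).Nonempty) (h : pi univ A ⊆ pi univ B ∪ pi univ C) {a b : ι}
    (ha : ¬ A a ⊆ B a) (hb : ¬ A b ⊆ C b) : a = b := by
  classical
  by_contra hab
  obtain ⟨p, hpA, hpB⟩ := not_subset.1 ha
  obtain ⟨q, hqA, hqC⟩ := not_subset.1 hb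
  choose r hr using hA
  set x := Function.update (Function.update r a p) b q
  have hxa : x a = p := by simp [x, hab]
  have hxb : x b = q := by simp [x]
  have hx : x ∈ pi univ A := fun i _ => by
    by_cases hib : i = b
    · subst hib; rwa [hxb]
    by_cases hia : i = a
    · subst hia; rwa [hxa]
    simpa [x, hia, hib] using hr i
  rcases h hx with hxB | hxC
  · exact hpB (hxa ▸ hxB a trivial)
  · exact hqC (hxb ▸ hxC b trivial)

theorem Set.exists_ne_eq_pair_of_ncard_eq_two {α : Type*} {s : Set α} {a : α}
    (hs : s.ncard = 2) (ha : a ∈ s) : ∃ b, b ≠ a ∧ s = {b, a} := by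
  obtain ⟨x, y, hxy, rfl⟩ := ncard_eq_two.1 hs
  rcases ha with rfl | rfl
  · exact ⟨y, hxy.symm, pair_comm _ _⟩
  · exact ⟨x, hxy, rfl⟩

variable {c : S → S} {d : ℕ}

/-- The letterwise form of `E a ⊆ E b`, see `eLetterStar_subset_iff`. -/
def Refines (a b : Option S) : Prop := b = none ∨ b = a

@[simp]
theorem refines_some_iff {a : Option S} {t : S} : Refines a (some t) ↔ a = some t := by
  simp [Refines, eq_comm]

theorem Refines.antisymm {a b : Option S} (hab : Refines a b) (hba : Refines b a) : a = b := by
  rcases hab with rfl | rfl <;> rcases hba with h | h <;> simp_all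

theorem Refines.eq_none_of_compl (hfix : ∀ s, c s ≠ s) {b : Option S} {s : S}
    (h : Refines (some s) b) (h' : Refines (some (c s)) b) : b = none := by
  rcases h with h | rfl
  · exact h
  · exact absurd (refines_some_iff.1 h') (by simpa using hfix s)

theorem exists_mem_eSet_superset (hinv : Function.Involutive c) (hfix : ∀ s, c s ≠ s)
    {P : Set S} (hP : ∀ s ∈ P, c s ∉ P) : ∃ B ∈ ESet c, P ⊆ B := by
  obtain ⟨_, -⟩ := exists_wellFoundedLT S
  refine ⟨{s | s ∈ P ∨ c s ∉ P ∧ s < c s}, fun s => ?_, fun s hs => Or.inl hs⟩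
  have hcs := hP (c s)
  rw [hinv s] at hcs
  have := (hfix s).lt_or_gt
  refine (xor_iff_or_and_not_and _ _).2 ?_
  simp only [mem_ofPred_eq, hinv s]
  grind

theorem mem_eLetterStar_iff {a : Option S} {B : Set S} :
    B ∈ ELetterStar c a ↔ B ∈ ESet c ∧ ∀ s ∈ a, s ∈ B := by
  cases a <;> simp [ELetterStar]

theorem eLetterStar_nonempty (hinv : Function.Involutive c) (hfix : ∀ s, c s ≠ s)
    (a : Option S) : (ELetterStar c a).Nonempty := by
  obtain ⟨B, hB, hPB⟩ := exists_mem_eSet_superset hinv hfix (P := {s | s ∈ a}) (by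
    rintro s rfl h
    exact hfix s (Option.mem_some_iff.1 h).symm)
  exact ⟨B, mem_eLetterStar_iff.2 ⟨hB, fun s hs => hPB hs⟩⟩

theorem not_mem_of_compl_mem {B : Set S} (hB : B ∈ ESet c) {s : S} (h : c s ∈ B) : s ∉ B :=
  fun hs => by rcases hB s with ⟨-, hcs⟩ | ⟨-, hs'⟩; exacts [hcs h, hs' hs]

theorem eLetterStar_subset_iff (hinv : Function.Involutive c) (hfix : ∀ s, c s ≠ s)
    {a b : Option S} : ELetterStar c a ⊆ ELetterStar c b ↔ Refines a b := by
  refine ⟨fun h => ?_, ?_⟩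
  · by_contra hab
    obtain ⟨hb, hba⟩ := not_or.1 hab
    obtain ⟨t, rfl⟩ := Option.ne_none_iff_exists'.1 hb
    -- a set in `E a` containing `t'` cannot lie in `E t`
    obtain ⟨B, hB, hPB⟩ := exists_mem_eSet_superset hinv hfix (P := {s | s ∈ a ∨ s = c t}) (by
      rintro s (rfl | rfl) (h | h)
      · exact hfix s (Option.mem_some_iff.1 h).symm
      · exact hba (by rw [hinv.injective h])
      · exact hba (by rw [Option.mem_def.1 h, hinv])
      · exact hfix _ h)
    have hBa : B ∈ ELetterStar c a := mem_eLetterStar_iff.2 ⟨hB, fun s hs => hPB (Or.inl hs)⟩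
    exact not_mem_of_compl_mem hB (hPB (Or.inr rfl)) ((mem_eLetterStar_iff.1 (h hBa)).2 t rfl)
  · rintro (rfl | rfl) B hB
    exacts [(mem_eLetterStar_iff.1 hB).1, hB]

theorem realizeStar_eq_pi (u : Fin d → Option S) :
    RealizeStar c u = pi univ fun i => ELetterStar c (u i) := by
  ext x
  simp [RealizeStar]

theorem realizeStar_nonempty (hinv : Function.Involutive c) (hfix : ∀ s, c s ≠ s)
    (u : Fin d → Option S) : (RealizeStar c u).Nonempty := by
  rw [realizeStar_eq_pi, univ_pi_nonempty_iff]
  exact fun i => eLetterStar_nonempty hinv hfix (u i)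

theorem realizeStar_subset_iff (hinv : Function.Involutive c) (hfix : ∀ s, c s ≠ s)
    {u w : Fin d → Option S} : RealizeStar c u ⊆ RealizeStar c w ↔ ∀ j, Refines (u j) (w j) := by
  simp only [realizeStar_eq_pi, univ_pi_subset_univ_pi_iff, eLetterStar_subset_iff hinv hfix,
    or_iff_left_iff_imp]
  rintro ⟨i, hi⟩
  exact absurd hi (eLetterStar_nonempty hinv hfix (u i)).ne_empty

theorem realizeStar_injective (hinv : Function.Involutive c) (hfix : ∀ s, c s ≠ s) :
    Function.Injective (RealizeStar c : (Fin d → Option S) → _) := fun _ _ h =>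
  funext fun j => ((realizeStar_subset_iff hinv hfix).1 h.le j).antisymm
    ((realizeStar_subset_iff hinv hfix).1 h.ge j)

theorem realizeSetStar_pair (u v : Fin d → Option S) :
    RealizeSetStar c {u, v} = RealizeStar c u ∪ RealizeStar c v :=
  biUnion_pair u v _

theorem DichoStar.disjoint_realizeStar {u v : Fin d → Option S} (h : DichoStar c u v) :
    Disjoint (RealizeStar c u) (RealizeStar c v) := by
  obtain ⟨j, s, hu, hv⟩ := h
  refine disjoint_left.2 fun x hxu hxv => ?_
  have hs := mem_eLetterStar_iff.1 (hxu j)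
  rw [hu] at hs
  have hcs := mem_eLetterStar_iff.1 (hxv j)
  rw [hv] at hcs
  exact not_mem_of_compl_mem hs.1 (hcs.2 (c s) rfl) (hs.2 s rfl)

theorem forall_ne_refines_of_realizeStar_subset_union (hinv : Function.Involutive c)
    (hfix : ∀ s, c s ≠ s) {u y₁ y₂ : Fin d → Option S}
    (h : RealizeStar c u ⊆ RealizeStar c y₁ ∪ RealizeStar c y₂)
    (h₁ : ¬ RealizeStar c u ⊆ RealizeStar c y₁) (h₂ : ¬ RealizeStar c u ⊆ RealizeStar c y₂)
    {k : Fin d} {s : S} (hk₁ : y₁ k = some s) (hk₂ : y₂ k = some (c s)) :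
    ∀ j ≠ k, Refines (u j) (y₁ j) ∧ Refines (u j) (y₂ j) := by
  have hbad : ∀ i j, ¬ Refines (u i) (y₁ i) → ¬ Refines (u j) (y₂ j) → i = j := by
    simp only [realizeStar_eq_pi] at h
    simp only [← eLetterStar_subset_iff hinv hfix]
    exact fun i j => eq_of_univ_pi_subset_union (fun i => eLetterStar_nonempty hinv hfix _) h
  simp only [realizeStar_subset_iff hinv hfix, not_forall] at h₁ h₂
  obtain ⟨a, ha⟩ := h₁
  obtain ⟨b, hb⟩ := h₂
  have hoff : ∀ j ≠ a, Refines (u j) (y₁ j) ∧ Refines (u j) (y₂ j) := fun j hj =>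
    ⟨by_contra fun h => hj ((hbad j b h hb).trans (hbad a b ha hb).symm),
      by_contra fun h => hj (hbad a j ha h).symm⟩
  obtain rfl : k = a := by
    by_contra hka
    obtain ⟨hu₁, hu₂⟩ := hoff k hka
    rw [hk₁, refines_some_iff] at hu₁
    rw [hk₂, refines_some_iff, hu₁] at hu₂
    exact hfix s (Option.some.inj hu₂).symm
  exact hoff

theorem twinPairStar_of_not_realizeStar_subset (hinv : Function.Involutive c)
    (hfix : ∀ s, c s ≠ s) {v₁ v₂ w₁ w₂ : Fin d → Option S}
    (hvd : DichoStar c v₁ v₂) (hwd : DichoStar c w₁ w₂)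
    (hun : RealizeStar c v₁ ∪ RealizeStar c v₂ = RealizeStar c w₁ ∪ RealizeStar c w₂)
    (hVW : ∀ v ∈ ({v₁, v₂} : Set _), ∀ w ∈ ({w₁, w₂} : Set _),
      ¬ RealizeStar c v ⊆ RealizeStar c w)
    (hWV : ∀ w ∈ ({w₁, w₂} : Set _), ∀ v ∈ ({v₁, v₂} : Set _),
      ¬ RealizeStar c w ⊆ RealizeStar c v) :
    TwinPairStar c v₁ v₂ := by
  obtain ⟨k, s, hv₁k, hv₂k⟩ := hvd
  obtain ⟨m, t, hw₁m, hw₂m⟩ := hwd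
  have hv₁ := forall_ne_refines_of_realizeStar_subset_union hinv hfix (hun ▸ subset_union_left)
    (hVW v₁ (by simp) w₁ (by simp)) (hVW v₁ (by simp) w₂ (by simp)) hw₁m hw₂m
  have hv₂ := forall_ne_refines_of_realizeStar_subset_union hinv hfix (hun ▸ subset_union_right)
    (hVW v₂ (by simp) w₁ (by simp)) (hVW v₂ (by simp) w₂ (by simp)) hw₁m hw₂m
  have hw₁ := forall_ne_refines_of_realizeStar_subset_union hinv hfix (hun.symm ▸ subset_union_left)
    (hWV w₁ (by simp) v₁ (by simp)) (hWV w₁ (by simp) v₂ (by simp)) hv₁k hv₂k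
  have hw₂ := forall_ne_refines_of_realizeStar_subset_union hinv hfix
    (hun.symm ▸ subset_union_right)
    (hWV w₂ (by simp) v₁ (by simp)) (hWV w₂ (by simp) v₂ (by simp)) hv₁k hv₂k
  refine ⟨k, ⟨s, hv₁k, hv₂k⟩, fun j hjk => ?_⟩
  by_cases hjm : j = m
  · subst hjm
    have h₁ := hw₁ j hjk
    have h₂ := hw₂ j hjk
    rw [hw₁m] at h₁
    rw [hw₂m] at h₂
    rw [h₁.2.eq_none_of_compl hfix h₂.2, h₁.1.eq_none_of_compl hfix h₂.1]
  · exact ((hv₂ j hjm).1.antisymm (hw₁ j hjk).2).trans ((hv₁ j hjm).1.antisymm (hw₁ j hjk).1).symm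

def IsTwoTwoPattern (c : S → S) (V W : Set (Fin d → Option S)) : Prop :=
  ∃ (i₁ i₂ : Fin d), i₁ ≠ i₂ ∧ ∃ (l₁ l₂ : S) (p : Fin d → Option S),
    ∃ v₁ v₂ w₁ w₂ : Fin d → Option S,
      V = {v₁, v₂} ∧ W = {w₁, w₂} ∧
      (∀ j, j ≠ i₁ → j ≠ i₂ →
        v₁ j = p j ∧ v₂ j = p j ∧ w₁ j = p j ∧ w₂ j = p j) ∧
      v₁ i₁ = none ∧ v₁ i₂ = some l₂ ∧
      v₂ i₁ = some l₁ ∧ v₂ i₂ = some (c l₂) ∧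
      w₁ i₁ = some (c l₁) ∧ w₁ i₂ = some l₂ ∧
      w₂ i₁ = some l₁ ∧ w₂ i₂ = none

-- the roles of the two coordinates are exchanged as well
theorem IsTwoTwoPattern.symm {V W : Set (Fin d → Option S)} (h : IsTwoTwoPattern c V W) :
    IsTwoTwoPattern c W V := by
  obtain ⟨i₁, i₂, hi, l₁, l₂, p, v₁, v₂, w₁, w₂, hV, hW, hp, h₁, h₂, h₃, h₄, h₅, h₆, h₇, h₈⟩ := h
  refine ⟨i₂, i₁, hi.symm, l₂, l₁, p, w₂, w₁, v₂, v₁, hW.trans (pair_comm _ _),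
    hV.trans (pair_comm _ _), fun j hj₂ hj₁ => ?_, h₈, h₇, h₆, h₅, h₄, h₃, h₂, h₁⟩
  obtain ⟨e₁, e₂, e₃, e₄⟩ := hp j hj₁ hj₂
  exact ⟨e₄, e₃, e₂, e₁⟩

theorem isTwoTwoPattern_of_realizeStar_subset (hinv : Function.Involutive c)
    (hfix : ∀ s, c s ≠ s) {v₁ v₂ w₁ w₂ : Fin d → Option S}
    (hvd : DichoStar c v₁ v₂) (hwd : DichoStar c w₁ w₂)
    (hun : RealizeStar c v₁ ∪ RealizeStar c v₂ = RealizeStar c w₁ ∪ RealizeStar c w₂)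
    (hne₁ : v₁ ≠ w₁) (hsub : RealizeStar c v₂ ⊆ RealizeStar c w₂) :
    IsTwoTwoPattern c {v₁, v₂} {w₁, w₂} := by
  have hw₁v₁ : RealizeStar c w₁ ⊆ RealizeStar c v₁ := fun x hx =>
    (hun ▸ Or.inl hx : x ∈ RealizeStar c v₁ ∪ RealizeStar c v₂).resolve_right
      fun h => disjoint_left.1 hwd.disjoint_realizeStar hx (hsub h)
  have hv₁w₁ : ¬ RealizeStar c v₁ ⊆ RealizeStar c w₁ := fun h =>
    hne₁ (realizeStar_injective hinv hfix (h.antisymm hw₁v₁))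
  have hv₁w₂ : ¬ RealizeStar c v₁ ⊆ RealizeStar c w₂ := fun h =>
    (realizeStar_nonempty hinv hfix w₁).ne_empty
      (hwd.disjoint_realizeStar.eq_bot_of_le (hw₁v₁.trans h))
  rw [realizeStar_subset_iff hinv hfix] at hw₁v₁ hsub
  obtain ⟨m, t, hw₁m, hw₂m⟩ := hwd
  have hv₁ := forall_ne_refines_of_realizeStar_subset_union hinv hfix (hun ▸ subset_union_left)
    hv₁w₁ hv₁w₂ hw₁m hw₂m
  have hw₁ : ∀ j ≠ m, w₁ j = v₁ j := fun j hj => (hw₁v₁ j).antisymm (hv₁ j hj).1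
  have hv₁m : v₁ m = none := (hw₁v₁ m).resolve_right fun h =>
    hne₁ (funext fun j => if hj : j = m then hj ▸ h else (hw₁ j hj).symm)
  obtain ⟨k, s, hv₁k, hv₂k⟩ := hvd
  have hkm : k ≠ m := by
    rintro rfl
    simp [hv₁m] at hv₁k
  have hw₂k : w₂ k = none :=
    (hv₁k ▸ (hv₁ k hkm).2).eq_none_of_compl hfix (hv₂k ▸ hsub k)
  have hw₂ := forall_ne_refines_of_realizeStar_subset_union hinv hfix
    (hun.symm ▸ subset_union_right)
    (fun h => by simpa [hw₂k, hv₁k] using (realizeStar_subset_iff hinv hfix).1 h k)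
    (fun h => by simpa [hw₂k, hv₂k] using (realizeStar_subset_iff hinv hfix).1 h k) hv₁k hv₂k
  refine ⟨m, k, hkm.symm, c t, s, v₁, v₁, v₂, w₁, w₂, rfl, rfl, fun j hjm hjk => ?_, hv₁m, hv₁k,
    refines_some_iff.1 (hw₂m ▸ hsub m), hv₂k, by rw [hinv t, hw₁m], by rw [hw₁ k hkm, hv₁k],
    hw₂m, hw₂k⟩
  have hw₂j : w₂ j = v₁ j := (hw₂ j hjk).1.antisymm (hv₁ j hjm).2
  exact ⟨rfl, ((hsub j).antisymm (hw₂ j hjk).2).trans hw₂j, hw₁ j hjm, hw₂j⟩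

theorem IsTwoTwoPattern.of_mem_of_realizeStar_subset (hinv : Function.Involutive c)
    (hfix : ∀ s, c s ≠ s) {V W : Set (Fin d → Option S)}
    (hV : PolyboxCodeStar c V) (hW : PolyboxCodeStar c W)
    (hdisj : Disjoint V W) (heq : EquivCodesStar c V W)
    (hVcard : V.ncard = 2) (hWcard : W.ncard = 2) {v w : Fin d → Option S}
    (hv : v ∈ V) (hw : w ∈ W) (hvw : RealizeStar c v ⊆ RealizeStar c w) :
    IsTwoTwoPattern c V W := by
  obtain ⟨v', hv', rfl⟩ := exists_ne_eq_pair_of_ncard_eq_two hVcard hv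
  obtain ⟨w', hw', rfl⟩ := exists_ne_eq_pair_of_ncard_eq_two hWcard hw
  rw [EquivCodesStar, realizeSetStar_pair, realizeSetStar_pair] at heq
  exact isTwoTwoPattern_of_realizeStar_subset hinv hfix (hV _ (by simp) _ (by simp) hv')
    (hW _ (by simp) _ (by simp) hw') heq (hdisj.ne_of_mem (by simp) (by simp)) hvw

theorem two_two_equivalent_codes_general {d : ℕ} (c : S → S)
    (hinv : Function.Involutive c) (hfix : ∀ s, c s ≠ s)
    (V W : Set (Fin d → Option S))
    (hV : PolyboxCodeStar c V) (hW : PolyboxCodeStar c W)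
    (hdisj : Disjoint V W) (heq : EquivCodesStar c V W)
    (hVt : NoTwinPairStar c V)
    (hVcard : V.ncard = 2) (hWcard : W.ncard = 2) :
    ∃ (i₁ i₂ : Fin d), i₁ ≠ i₂ ∧ ∃ (l₁ l₂ : S) (p : Fin d → Option S),
      ∃ v₁ v₂ w₁ w₂ : Fin d → Option S,
        V = {v₁, v₂} ∧ W = {w₁, w₂} ∧
        (∀ j, j ≠ i₁ → j ≠ i₂ →
          v₁ j = p j ∧ v₂ j = p j ∧ w₁ j = p j ∧ w₂ j = p j) ∧
        v₁ i₁ = none ∧ v₁ i₂ = some l₂ ∧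
        v₂ i₁ = some l₁ ∧ v₂ i₂ = some (c l₂) ∧
        w₁ i₁ = some (c l₁) ∧ w₁ i₂ = some l₂ ∧
        w₂ i₁ = some l₁ ∧ w₂ i₂ = none := by
  by_cases hVW : ∃ v ∈ V, ∃ w ∈ W, RealizeStar c v ⊆ RealizeStar c w
  · obtain ⟨v, hv, w, hw, hvw⟩ := hVW
    exact IsTwoTwoPattern.of_mem_of_realizeStar_subset hinv hfix hV hW hdisj heq hVcard hWcard
      hv hw hvw
  by_cases hWV : ∃ w ∈ W, ∃ v ∈ V, RealizeStar c w ⊆ RealizeStar c v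
  · obtain ⟨w, hw, v, hv, hwv⟩ := hWV
    exact (IsTwoTwoPattern.of_mem_of_realizeStar_subset hinv hfix hW hV hdisj.symm heq.symm
      hWcard hVcard hw hv hwv).symm
  push Not at hVW hWV
  obtain ⟨v₁, v₂, hv, rfl⟩ := ncard_eq_two.1 hVcard
  obtain ⟨w₁, w₂, hw, rfl⟩ := ncard_eq_two.1 hWcard
  rw [EquivCodesStar, realizeSetStar_pair, realizeSetStar_pair] at heq
  exact absurd (twinPairStar_of_not_realizeStar_subset hinv hfix
    (hV _ (by simp) _ (by simp) hv) (hW _ (by simp) _ (by simp) hw) heq hVW hWV)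
    (hVt v₁ (by simp) v₂ (by simp))

theorem two_two_equivalent_codes {d : ℕ} [Fintype S] (c : S → S)
    (hinv : Function.Involutive c) (hfix : ∀ s, c s ≠ s) (hd : 2 ≤ d)
    (V W : Set (Fin d → Option S))
    (hV : PolyboxCodeStar c V) (hW : PolyboxCodeStar c W)
    (hdisj : Disjoint V W) (heq : EquivCodesStar c V W)
    (hVt : NoTwinPairStar c V) (hWt : NoTwinPairStar c W)
    (hVcard : V.ncard = 2) (hWcard : W.ncard = 2) :
    ∃ (i₁ i₂ : Fin d), i₁ ≠ i₂ ∧ ∃ (l₁ l₂ : S) (p : Fin d → Option S),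
      ∃ v₁ v₂ w₁ w₂ : Fin d → Option S,
        V = {v₁, v₂} ∧ W = {w₁, w₂} ∧
        (∀ j, j ≠ i₁ → j ≠ i₂ →
          v₁ j = p j ∧ v₂ j = p j ∧ w₁ j = p j ∧ w₂ j = p j) ∧
        v₁ i₁ = none ∧ v₁ i₂ = some l₂ ∧
        v₂ i₁ = some l₁ ∧ v₂ i₂ = some (c l₂) ∧
        w₁ i₁ = some (c l₁) ∧ w₁ i₂ = some l₂ ∧
        w₂ i₁ = some l₁ ∧ w₂ i₂ = none :=
  two_two_equivalent_codes_general c hinv hfix V W hV hW hdisj heq hVt hVcard hWcard
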